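/- The polynomial semiring B[x] over the Boolean semiring B = {0,1} (with 1+1=1) is not Noetherian, i.e., there exists a strictly ascending non-terminating chain of ideals of B[x]. -/

import Mathlib

/-- The Boolean semiring `B = {0,1}` with `1 + 1 = 1`. -/
inductive B : Type
  | zero
  | one
deriving DecidableEq

instance : Fintype B :=
  ⟨⟨↑[B.zero, B.one], by decide⟩, fun x => by cases x <;> decide⟩

namespace B

def add : B → B → B
  | zero, b => b
  | one, _ => one

def mul : B → B → B
  | zero, _ => zero
  | one, b => b

instance : Zero B := ⟨zero⟩
instance : One B := ⟨one⟩
instance : Add B := ⟨add⟩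
instance : Mul B := ⟨mul⟩

instance : CommSemiring B where
  add_assoc := by decide
  zero_add := by decide
  add_zero := by decide
  add_comm := by decide
  mul_assoc := by decide
  one_mul := by decide
  mul_one := by decide
  left_distrib := by decide
  right_distrib := by decide
  zero_mul := by decide
  mul_zero := by decide
  mul_comm := by decide
  nsmul := nsmulRec
  npow := npowRec

end B

open Polynomial

lemma B.add_eq_one_iff (a b : B) : a + b = 1 ↔ a = 1 ∨ b = 1 := by
  revert a b; decide

lemma B.mul_eq_one_iff (a b : B) : a * b = 1 ↔ a = 1 ∧ b = 1 := by
  revert a b; decide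

lemma B.one_add (a : B) : (1 : B) + a = 1 := by revert a; decide

lemma B.sum_eq_one {α : Type*} [DecidableEq α] (s : Finset α) (g : α → B) (a : α) (ha : a ∈ s)
    (h : g a = 1) : ∑ x ∈ s, g x = 1 := by
  rw [← Finset.add_sum_erase s g ha, h, B.one_add]

/-- The generators of the `n`-th ideal: `X + X^k` for `2 ≤ k ≤ n+1`. -/
def gens (n : ℕ) : Set (Polynomial B) :=
  {p | ∃ k, 2 ≤ k ∧ k ≤ n + 1 ∧ p = X + X ^ k}

noncomputable def chain (n : ℕ) : Ideal (Polynomial B) := Ideal.span (gens n)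

lemma coeff_mul_one' (c p : Polynomial B) :
    (c * p).coeff 1 = c.coeff 0 * p.coeff 1 + c.coeff 1 * p.coeff 0 := by
  rw [coeff_mul]
  rw [show Finset.HasAntidiagonal.antidiagonal 1 = {(0,1),(1,0)} from rfl]
  simp

/-- The bounding ideal: polynomials with zero constant term such that if the
coefficient of `X` is `1`, then some coefficient with index in `[2, n+1]` is `1`. -/
noncomputable def J (n : ℕ) : Ideal (Polynomial B) where
  carrier := {p | p.coeff 0 = 0 ∧ (p.coeff 1 = 1 → ∃ k, 2 ≤ k ∧ k ≤ n + 1 ∧ p.coeff k = 1)}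
  zero_mem' := by simp
  add_mem' := by
    rintro a b ⟨ha0, ha1⟩ ⟨hb0, hb1⟩
    refine ⟨by simp [ha0, hb0], ?_⟩
    intro h
    rw [coeff_add, B.add_eq_one_iff] at h
    rcases h with h | h
    · obtain ⟨k, hk2, hkn, hk⟩ := ha1 h
      exact ⟨k, hk2, hkn, by rw [coeff_add, B.add_eq_one_iff]; exact Or.inl hk⟩
    · obtain ⟨k, hk2, hkn, hk⟩ := hb1 h
      exact ⟨k, hk2, hkn, by rw [coeff_add, B.add_eq_one_iff]; exact Or.inr hk⟩
  smul_mem' := by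
    rintro c p ⟨hp0, hp1⟩
    rw [smul_eq_mul]
    refine ⟨by rw [mul_coeff_zero, hp0, mul_zero], ?_⟩
    intro h
    rw [coeff_mul_one', hp0, mul_zero, add_zero, B.mul_eq_one_iff] at h
    obtain ⟨hc0, hp1'⟩ := h
    obtain ⟨k, hk2, hkn, hk⟩ := hp1 hp1'
    refine ⟨k, hk2, hkn, ?_⟩
    rw [coeff_mul]
    exact B.sum_eq_one _ _ (0, k) (by simp) (by rw [hc0, hk]; decide)

lemma gens_subset_J (n : ℕ) : gens n ⊆ (J n : Set (Polynomial B)) := by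
  rintro p ⟨k, hk2, hkn, rfl⟩
  constructor
  · rw [coeff_add, coeff_X_zero, coeff_X_pow, if_neg (by omega : ¬ (0:ℕ) = k)]
    decide
  · intro _
    refine ⟨k, hk2, hkn, ?_⟩
    rw [coeff_add, coeff_X, coeff_X_pow, if_neg (by omega : ¬ (1:ℕ) = k),
      if_pos rfl]
    decide

lemma key_mem (n : ℕ) : (X + X ^ (n + 2) : Polynomial B) ∈ chain (n + 1) :=
  Ideal.subset_span ⟨n + 2, by omega, by omega, rfl⟩

lemma key_not_mem (n : ℕ) : (X + X ^ (n + 2) : Polynomial B) ∉ chain n := by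
  intro h
  have h' : (X + X ^ (n + 2) : Polynomial B) ∈ J n :=
    Ideal.span_le.mpr (gens_subset_J n) h
  obtain ⟨_, h1⟩ := h'
  have hc1 : (X + X ^ (n + 2) : Polynomial B).coeff 1 = 1 := by
    rw [coeff_add, coeff_X_one, coeff_X_pow, if_neg (by omega : ¬ (1:ℕ) = n + 2)]
    decide
  obtain ⟨k, hk2, hkn, hk⟩ := h1 hc1
  rw [coeff_add, coeff_X, coeff_X_pow, if_neg (by omega : ¬ (1:ℕ) = k),
    if_neg (by omega : ¬ k = n + 2)] at hk
  exact absurd hk (by decide)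

/-- In `B`, `1 + 1 = 1`, and the polynomial semiring `B[x]` is not
Noetherian: there is a strictly ascending (hence non-terminating) chain of ideals. -/
theorem stmt_13 :
    (1 : B) + 1 = 1 ∧ ∃ f : ℕ → Ideal (Polynomial B), StrictMono f := by
  refine ⟨by decide, chain, strictMono_nat_of_lt_succ fun n => ?_⟩
  refine lt_of_le_of_ne (Ideal.span_mono ?_) ?_
  · rintro p ⟨k, hk2, hkn, rfl⟩
    exact ⟨k, hk2, by omega, rfl⟩
  · intro heq
    exact key_not_mem n (heq ▸ key_mem n)
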